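/- (Generalized Hölder inequality for infinitely many functions) Let $(\Omega,\mathcal{F},\mu)$ be a measure space, $0<p_i<\infty$ with $\sum_{i=1}^\infty 1/p_i = 1/p$, and let $f_i\ge 0$ be measurable. If $\prod_{i=1}^\infty \|f_i\|_{L^{p_i}} < \infty$ (the infinite product converges), then the pointwise infinite product $\prod_{i=1}^\infty f_i(x)$ converges for a.e. $x$ and defines a measurable function satisfying $\|\prod_{i=1}^\infty f_i\|_{L^p} \le \prod_{i=1}^\infty \|f_i\|_{L^{p_i}}$. -/

import Mathlib

open MeasureTheory Filter Topology ENNReal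

noncomputable section

/-- The value of an infinite product in `ℝ≥0∞`, as the `limsup` of partial
products (equal to the limit whenever the partial products converge). -/
def iprod (c : ℕ → ℝ≥0∞) : ℝ≥0∞ :=
  Filter.limsup (fun n => ∏ i ∈ Finset.range n, c i) Filter.atTop

/-- Convergence of an infinite product in `ℝ≥0∞` to a finite value. -/
def IProdConv (c : ℕ → ℝ≥0∞) : Prop :=
  ∃ L : ℝ≥0∞, L ≠ ∞ ∧ Tendsto (fun n => ∏ i ∈ Finset.range n, c i) atTop (𝓝 L)

/-- The dyadic cube of generation `k` indexed by `m ∈ ℤⁿ`. -/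
def dyadicCube (n : ℕ) (k : ℤ) (m : Fin n → ℤ) : Set (Fin n → ℝ) :=
  {x | ∀ j, (m j : ℝ) * (2:ℝ) ^ (-k) ≤ x j ∧ x j < ((m j : ℝ) + 1) * (2:ℝ) ^ (-k)}

/-- Average of `f` over the dyadic cube `(k, m)` (w.r.t. Lebesgue measure). -/
def dyadicAvg {n : ℕ} (f : (Fin n → ℝ) → ℝ≥0∞) (k : ℤ) (m : Fin n → ℤ) : ℝ≥0∞ :=
  (∫⁻ y in dyadicCube n k m, f y) / volume (dyadicCube n k m)

/-- The dyadic maximal function. -/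
def Md {n : ℕ} (f : (Fin n → ℝ) → ℝ≥0∞) (x : Fin n → ℝ) : ℝ≥0∞ :=
  ⨆ (k : ℤ) (m : Fin n → ℤ) (_ : x ∈ dyadicCube n k m), dyadicAvg f k m

/-- The generalized dyadic maximal function involving the infinite product. -/
def MMd {n : ℕ} (f : ℕ → (Fin n → ℝ) → ℝ≥0∞) (x : Fin n → ℝ) : ℝ≥0∞ :=
  ⨆ (k : ℤ) (m : Fin n → ℤ) (_ : x ∈ dyadicCube n k m),
    iprod (fun i => dyadicAvg (f i) k m)

/-- Weighted `L^q` norm (for `ℝ≥0∞`-valued `f`). -/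
def wnorm {α : Type*} [MeasurableSpace α] (μ : Measure α) (q : ℝ)
    (w : α → ℝ≥0∞) (f : α → ℝ≥0∞) : ℝ≥0∞ :=
  (∫⁻ x, f x ^ q * w x ∂μ) ^ (1 / q)

end

/-! Normalising `f i` by its `L^{P i}` norm gives `g i` with `∫ g i ^ P i = 1`. Since `P i ≥ 1`
eventually, Bernoulli's inequality gives `∫ (g i - 1) ≤ 1 / P i`, which is summable, so
`∑ (g i x - 1) < ∞` for a.e. `x`, and then the partial products of `g i x`, hence of `f i x`,
converge to a finite limit. For the norm bound, Hölder's inequality for the first `n` factors with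
`1 / r n = ∑_{i<n} 1 / P i` bounds `∫ (∏_{i<n} f i) ^ r n` by `(∏_{i<n} ‖f i‖_{P i}) ^ r n`, and
Fatou's lemma passes to the limit `r n → p`. -/

open Finset

theorem ENNReal.ofReal_mul_tsub_one_le_rpow {Q : ℝ} (hQ : 1 ≤ Q) (c : ℝ≥0∞) :
    ENNReal.ofReal Q * (c - 1) ≤ c ^ Q := by
  have hQ0 : 0 < Q := zero_lt_one.trans_le hQ
  rcases eq_or_ne c ∞ with rfl | hc
  · simp [ENNReal.top_rpow_of_pos hQ0]
  obtain ⟨t, ht, rfl⟩ : ∃ t : ℝ, 0 ≤ t ∧ ENNReal.ofReal t = c :=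
    ⟨c.toReal, ENNReal.toReal_nonneg, ENNReal.ofReal_toReal hc⟩
  have bernoulli : 1 + Q * (t - 1) ≤ t ^ Q := by
    simpa using one_add_mul_self_le_rpow_one_add (by linarith : -1 ≤ t - 1) hQ
  rw [← ENNReal.ofReal_one, ← ENNReal.ofReal_sub _ zero_le_one, ← ENNReal.ofReal_mul hQ0.le,
    ENNReal.ofReal_rpow_of_nonneg ht hQ0.le]
  exact ENNReal.ofReal_le_ofReal (by linarith)

theorem ENNReal.exists_tendsto_prod_range_of_tsum_tsub_one_ne_top {c : ℕ → ℝ≥0∞}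
    (hc : ∑' i, (c i - 1) ≠ ∞) :
    ∃ l ≠ ∞, Tendsto (fun n => ∏ i ∈ range n, c i) atTop (𝓝 l) := by
  -- `c i = max (c i) 1 * min (c i) 1`: the first factors form a real product `∏ (1 + aᵢ)` with
  -- summable `aᵢ`, the partial products of the second decrease.
  have hsplit : ∀ i, (1 + (c i - 1)) * min (c i) 1 = c i := fun i => by
    rcases le_total (c i) 1 with h | h
    · simp [tsub_eq_zero_of_le h, h]
    · simp [add_tsub_cancel_of_le h, h]
  have hreal : Multipliable fun i => 1 + (c i - 1).toReal :=
    Real.multipliable_one_add_of_summable (ENNReal.summable_toReal hc)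
  have hlarge : Tendsto (fun n => ∏ i ∈ range n, (1 + (c i - 1))) atTop
      (𝓝 (ENNReal.ofReal (∏' i, (1 + (c i - 1).toReal)))) := by
    refine (ENNReal.tendsto_ofReal hreal.tendsto_prod_tprod_nat).congr fun n => ?_
    rw [ENNReal.ofReal_prod_of_nonneg fun i _ => by positivity]
    refine prod_congr rfl fun i _ => ?_
    rw [ENNReal.ofReal_add zero_le_one ENNReal.toReal_nonneg, ENNReal.ofReal_one,
      ENNReal.ofReal_toReal (ENNReal.ne_top_of_tsum_ne_top hc i)]
  have hsmall :=
    (ENNReal.multipliable_of_le_one fun i => min_le_right (c i) 1).tendsto_prod_tprod_nat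
  have hsmall_ne_top : ∏' i, min (c i) 1 ≠ ∞ :=
    ne_top_of_le_ne_top one_ne_top (tprod_le_one fun i => min_le_right _ _)
  refine ⟨_, ENNReal.mul_ne_top ENNReal.ofReal_ne_top hsmall_ne_top,
    (ENNReal.Tendsto.mul hlarge (.inr hsmall_ne_top) hsmall (.inr ENNReal.ofReal_ne_top)).congr
      fun n => ?_⟩
  rw [← prod_mul_distrib]
  exact prod_congr rfl fun i _ => hsplit i

theorem ENNReal.ne_top_of_tendsto_prod_range {c : ℕ → ℝ≥0∞} {L : ℝ≥0∞} (hc : ∀ i, c i ≠ 0)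
    (hL : L ≠ ∞) (h : Tendsto (fun n => ∏ i ∈ range n, c i) atTop (𝓝 L)) (j : ℕ) : c j ≠ ∞ := by
  intro hj
  refine hL (tendsto_nhds_unique h (tendsto_const_nhds.congr' ?_))
  filter_upwards [eventually_gt_atTop j] with n hn
  rw [← mul_prod_erase _ _ (mem_range.2 hn), hj,
    ENNReal.top_mul (prod_ne_zero_iff.2 fun i _ => hc i)]

theorem tendsto_prod_range_zero_of_eq_zero {M : Type*} [CommMonoidWithZero M] [TopologicalSpace M]
    {c : ℕ → M} {j : ℕ} (hj : c j = 0) :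
    Tendsto (fun n => ∏ i ∈ range n, c i) atTop (𝓝 0) := by
  refine tendsto_const_nhds.congr' ?_
  filter_upwards [eventually_gt_atTop j] with n hn
  exact (prod_eq_zero (mem_range.2 hn) hj).symm

theorem ENNReal.Tendsto.rpow_of_ne_top {α : Type*} {l : Filter α} {u : α → ℝ≥0∞} {r : α → ℝ}
    {a : ℝ≥0∞} {q : ℝ} (ha : a ≠ ∞) (hq : 0 < q) (hu : Tendsto u l (𝓝 a))
    (hr : Tendsto r l (𝓝 q)) : Tendsto (fun x => u x ^ r x) l (𝓝 (a ^ q)) := by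
  have hnn : Tendsto (fun x => (u x).toNNReal ^ r x) l (𝓝 (a.toNNReal ^ q)) :=
    ((ENNReal.tendsto_toNNReal ha).comp hu).nnrpow hr (.inr hq)
  rw [← ENNReal.coe_toNNReal ha, ← ENNReal.coe_rpow_of_nonneg _ hq.le]
  refine (ENNReal.tendsto_coe.2 hnn).congr' ?_
  filter_upwards [hu.eventually_ne ha, hr.eventually_const_lt hq] with x hux hrx
  rw [ENNReal.coe_rpow_of_nonneg _ hrx.le, ENNReal.coe_toNNReal hux]

theorem lintegral_prod_rpow_le {α ι : Type*} [MeasurableSpace α] {μ : Measure α} (s : Finset ι)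
    {f : ι → α → ℝ≥0∞} (hf : ∀ i ∈ s, AEMeasurable (f i) μ) {P : ι → ℝ} (hP : ∀ i ∈ s, 0 < P i)
    {r : ℝ} (hr : 0 ≤ r) (hrP : ∑ i ∈ s, r / P i = 1) :
    ∫⁻ a, (∏ i ∈ s, f i a) ^ r ∂μ ≤ (∏ i ∈ s, (∫⁻ a, f i a ^ P i ∂μ) ^ (1 / P i)) ^ r := by
  have holder := lintegral_prod_norm_pow_le s (μ := μ) (fun i hi => (hf i hi).pow_const (P i))
    hrP fun i hi => div_nonneg hr (hP i hi).le
  have hexp : ∀ i ∈ s, P i * (r / P i) = r := fun i hi => mul_div_cancel₀ r (hP i hi).ne'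
  calc ∫⁻ a, (∏ i ∈ s, f i a) ^ r ∂μ
      = ∫⁻ a, ∏ i ∈ s, (f i a ^ P i) ^ (r / P i) ∂μ := by
        refine lintegral_congr fun a => ?_
        rw [← ENNReal.prod_rpow_of_nonneg hr]
        exact prod_congr rfl fun i hi => by rw [← ENNReal.rpow_mul, hexp i hi]
    _ ≤ ∏ i ∈ s, (∫⁻ a, f i a ^ P i ∂μ) ^ (r / P i) := holder
    _ = (∏ i ∈ s, (∫⁻ a, f i a ^ P i ∂μ) ^ (1 / P i)) ^ r := by
        rw [← ENNReal.prod_rpow_of_nonneg hr]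
        exact prod_congr rfl fun i _ => by rw [← ENNReal.rpow_mul, one_div_mul_eq_div]

theorem lintegral_normalized_rpow_eq_one {α : Type*} [MeasurableSpace α] {μ : Measure α}
    (f : α → ℝ≥0∞) {P : ℝ} (hP : 0 < P) (h0 : ∫⁻ x, f x ^ P ∂μ ≠ 0)
    (htop : ∫⁻ x, f x ^ P ∂μ ≠ ∞) :
    ∫⁻ x, (f x / (∫⁻ y, f y ^ P ∂μ) ^ (1 / P)) ^ P ∂μ = 1 := by
  set I := ∫⁻ y, f y ^ P ∂μ
  have hIP : (I ^ (1 / P)) ^ P = I := by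
    rw [← ENNReal.rpow_mul, one_div_mul_cancel hP.ne', ENNReal.rpow_one]
  simp_rw [ENNReal.div_rpow_of_nonneg _ _ hP.le, hIP, div_eq_mul_inv]
  rw [lintegral_mul_const' _ _ (ENNReal.inv_ne_top.2 h0), ENNReal.mul_inv_cancel h0 htop]

section

variable {Ω : Type*} [MeasurableSpace Ω] {μ : Measure Ω}

theorem ofReal_mul_lintegral_tsub_one_le {Q : ℝ} (hQ : 1 ≤ Q) (g : Ω → ℝ≥0∞) :
    ENNReal.ofReal Q * ∫⁻ x, (g x - 1) ∂μ ≤ ∫⁻ x, g x ^ Q ∂μ :=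
  (lintegral_const_mul_le _ _).trans
    (lintegral_mono fun x => ENNReal.ofReal_mul_tsub_one_le_rpow hQ (g x))

theorem ae_ne_top_of_lintegral_rpow_ne_top {g : Ω → ℝ≥0∞} (hg : AEMeasurable g μ) {P : ℝ}
    (hP : 0 < P) (hint : ∫⁻ x, g x ^ P ∂μ ≠ ∞) : ∀ᵐ x ∂μ, g x ≠ ∞ := by
  filter_upwards [ae_lt_top' (hg.pow_const P) hint] with x hx hgx
  simp [hgx, ENNReal.top_rpow_of_pos hP] at hx

theorem ae_tsum_tsub_one_ne_top {g : ℕ → Ω → ℝ≥0∞} (hg : ∀ i, AEMeasurable (g i) μ)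
    {P : ℕ → ℝ} (hP : ∀ i, 0 < P i) (hPs : Summable fun i => 1 / P i)
    (hg1 : ∀ i, ∫⁻ x, g i x ^ P i ∂μ ≤ 1) : ∀ᵐ x ∂μ, ∑' i, (g i x - 1) ≠ ∞ := by
  obtain ⟨M, hM⟩ := eventually_atTop.1 (hPs.tendsto_atTop_zero.eventually_lt_const one_pos)
  have hPM : ∀ k, 1 ≤ P (k + M) := fun k =>
    ((div_lt_one (hP _)).1 (hM (k + M) (Nat.le_add_left M k))).le
  have hterm : ∀ k, ∫⁻ x, (g (k + M) x - 1) ∂μ ≤ ENNReal.ofReal (1 / P (k + M)) := fun k => by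
    rw [one_div, ENNReal.ofReal_inv_of_pos (hP _), ENNReal.le_inv_iff_mul_le, mul_comm]
    exact (ofReal_mul_lintegral_tsub_one_le (hPM k) _).trans (hg1 _)
  have htail : ∫⁻ x, ∑' k, (g (k + M) x - 1) ∂μ ≠ ∞ := by
    rw [lintegral_tsum (f := fun k x => g (k + M) x - 1) fun k => (hg _).sub aemeasurable_const]
    refine ne_top_of_le_ne_top ?_ (ENNReal.tsum_le_tsum hterm)
    rw [← ENNReal.ofReal_tsum_of_nonneg (fun k => (one_div_pos.2 (hP _)).le)
      ((summable_nat_add_iff M).2 hPs)]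
    exact ENNReal.ofReal_ne_top
  have hfin : ∀ᵐ x ∂μ, ∀ i, g i x ≠ ∞ := ae_all_iff.2 fun i =>
    ae_ne_top_of_lintegral_rpow_ne_top (hg i) (hP i) (ne_top_of_le_ne_top one_ne_top (hg1 i))
  filter_upwards [ae_lt_top' (AEMeasurable.tsum fun k => (hg _).sub aemeasurable_const)
    htail, hfin] with x hx hfx
  rw [← ENNReal.summable.sum_add_tsum_nat_add' (k := M)]
  exact ENNReal.add_ne_top.2 ⟨ENNReal.sum_ne_top.2 fun i _ => ENNReal.sub_ne_top (hfx i), hx.ne⟩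

variable {P : ℕ → ℝ} {f : ℕ → Ω → ℝ≥0∞} {L : ℝ≥0∞}

theorem ae_exists_tendsto_prod_range (hP : ∀ i, 0 < P i) (hPs : Summable fun i => 1 / P i)
    (hf : ∀ i, AEMeasurable (f i) μ) (hL : L ≠ ∞)
    (hconv : Tendsto (fun n => ∏ i ∈ range n, (∫⁻ x, f i x ^ P i ∂μ) ^ (1 / P i)) atTop (𝓝 L)) :
    ∀ᵐ x ∂μ, ∃ l ≠ ∞, Tendsto (fun n => ∏ i ∈ range n, f i x) atTop (𝓝 l) := by
  by_cases hzero : ∃ j, ∫⁻ x, f j x ^ P j ∂μ = 0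
  · obtain ⟨j, hj⟩ := hzero
    filter_upwards [(lintegral_eq_zero_iff' ((hf j).pow_const _)).1 hj] with x hx
    exact ⟨0, zero_ne_top,
      tendsto_prod_range_zero_of_eq_zero ((ENNReal.rpow_eq_zero_iff_of_pos (hP j)).1 hx)⟩
  push Not at hzero
  set N := fun i => (∫⁻ x, f i x ^ P i ∂μ) ^ (1 / P i)
  have hN0 : ∀ i, N i ≠ 0 := fun i => by
    simp [N, ENNReal.rpow_eq_zero_iff, hzero i, (hP i).le]
  have hNtop := ENNReal.ne_top_of_tendsto_prod_range hN0 hL hconv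
  have hItop : ∀ i, ∫⁻ x, f i x ^ P i ∂μ ≠ ∞ := fun i hI => hNtop i (by simp [N, hI, hP i])
  have hnorm : ∀ i, ∫⁻ x, (f i x / N i) ^ P i ∂μ = 1 := fun i =>
    lintegral_normalized_rpow_eq_one _ (hP i) (hzero i) (hItop i)
  filter_upwards [ae_tsum_tsub_one_ne_top (fun i => (hf i).div_const (N i)) hP hPs
    fun i => (hnorm i).le] with x hx
  obtain ⟨G, hG, hGt⟩ := ENNReal.exists_tendsto_prod_range_of_tsum_tsub_one_ne_top hx
  refine ⟨L * G, ENNReal.mul_ne_top hL hG,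
    (ENNReal.Tendsto.mul hconv (.inr hG) hGt (.inr hL)).congr fun n => ?_⟩
  rw [← prod_mul_distrib]
  exact prod_congr rfl fun i _ => ENNReal.mul_div_cancel (hN0 i) (hNtop i)

theorem lintegral_rpow_le_of_tendsto_prod_range {p : ℝ} (hp : 0 < p) (hP : ∀ i, 0 < P i)
    (hsum : HasSum (fun i => 1 / P i) (1 / p)) (hf : ∀ i, AEMeasurable (f i) μ) (hL : L ≠ ∞)
    (hconv : Tendsto (fun n => ∏ i ∈ range n, (∫⁻ x, f i x ^ P i ∂μ) ^ (1 / P i)) atTop (𝓝 L))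
    {F : Ω → ℝ≥0∞}
    (hF : ∀ᵐ x ∂μ, F x ≠ ∞ ∧ Tendsto (fun n => ∏ i ∈ range n, f i x) atTop (𝓝 (F x))) :
    ∫⁻ x, F x ^ p ∂μ ≤ L ^ p := by
  set r : ℕ → ℝ := fun n => (∑ i ∈ range n, 1 / P i)⁻¹
  have hr : Tendsto r atTop (𝓝 p) := by
    simpa [r] using hsum.tendsto_sum_nat.inv₀ (by positivity)
  have hholder : ∀ᶠ n in atTop, ∫⁻ x, (∏ i ∈ range n, f i x) ^ r n ∂μ ≤
      (∏ i ∈ range n, (∫⁻ x, f i x ^ P i ∂μ) ^ (1 / P i)) ^ r n := by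
    filter_upwards [eventually_gt_atTop 0] with n hn
    have hpos : 0 < ∑ i ∈ range n, 1 / P i :=
      sum_pos (fun i _ => one_div_pos.2 (hP i)) (nonempty_range_iff.2 hn.ne')
    refine lintegral_prod_rpow_le _ (fun i _ => hf i) (fun i _ => hP i) (inv_pos.2 hpos).le ?_
    simp_rw [div_eq_mul_one_div (r n), ← mul_sum, r, inv_mul_cancel₀ hpos.ne']
  calc ∫⁻ x, F x ^ p ∂μ
      = ∫⁻ x, liminf (fun n => (∏ i ∈ range n, f i x) ^ r n) atTop ∂μ :=
        lintegral_congr_ae <| hF.mono fun x hx =>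
          ((ENNReal.Tendsto.rpow_of_ne_top hx.1 hp hx.2 hr).liminf_eq).symm
    _ ≤ liminf (fun n => ∫⁻ x, (∏ i ∈ range n, f i x) ^ r n ∂μ) atTop :=
        lintegral_liminf_le' fun n => (aemeasurable_fun_prod _ fun i _ => hf i).pow_const _
    _ ≤ liminf (fun n => (∏ i ∈ range n, (∫⁻ x, f i x ^ P i ∂μ) ^ (1 / P i)) ^ r n) atTop :=
        liminf_le_liminf hholder
    _ = L ^ p := (ENNReal.Tendsto.rpow_of_ne_top hL hp hconv hr).liminf_eq

end

/-- Generalized Hölder inequality for infinitely many functions: if the infinite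
product of the `L^{pᵢ}` norms converges to a finite value `L`, then the pointwise
infinite product converges a.e. and its `L^p` norm is at most `L`. -/
theorem generalized_holder_infinite
    {Ω : Type*} [MeasurableSpace Ω] (μ : Measure Ω)
    (p : ℝ) (hp : 0 < p) (P : ℕ → ℝ) (hP : ∀ i, 0 < P i)
    (hsum : HasSum (fun i => 1 / P i) (1 / p))
    (f : ℕ → Ω → ℝ≥0∞) (hf : ∀ i, Measurable (f i))
    (L : ℝ≥0∞) (hL : L ≠ ∞)
    (hconv : Tendsto (fun n => ∏ i ∈ Finset.range n,
        (∫⁻ x, f i x ^ P i ∂μ) ^ (1 / P i)) atTop (𝓝 L)) :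
    (∀ᵐ x ∂μ, ∃ l : ℝ≥0∞,
        Tendsto (fun n => ∏ i ∈ Finset.range n, f i x) atTop (𝓝 l)) ∧
    (∫⁻ x, (iprod fun i => f i x) ^ p ∂μ) ^ (1 / p) ≤ L := by
  have hae := ae_exists_tendsto_prod_range hP hsum.summable (fun i => (hf i).aemeasurable) hL hconv
  have hiprod : ∀ᵐ x ∂μ, iprod (fun i => f i x) ≠ ∞ ∧
      Tendsto (fun n => ∏ i ∈ range n, f i x) atTop (𝓝 (iprod fun i => f i x)) := by
    filter_upwards [hae] with x ⟨l, hl, hlim⟩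
    rw [iprod, hlim.limsup_eq]
    exact ⟨hl, hlim⟩
  refine ⟨hae.mono fun x ⟨l, _, hlim⟩ => ⟨l, hlim⟩, ?_⟩
  calc (∫⁻ x, (iprod fun i => f i x) ^ p ∂μ) ^ (1 / p)
      ≤ (L ^ p) ^ (1 / p) := by
        gcongr
        exact lintegral_rpow_le_of_tendsto_prod_range hp hP hsum (fun i => (hf i).aemeasurable)
          hL hconv hiprod
    _ = L := by rw [← ENNReal.rpow_mul, mul_one_div_cancel hp.ne', ENNReal.rpow_one]
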